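/- Let σ be the surface measure on the unit sphere S ⊆ ℝ^d, let μ be a non-zero finite Borel measure with compact support contained in [a,b] ⊆ (0,∞), and define μ₀ by dμ₀(r) = r^{(d−1)/2} dμ(r). Define the measure μ₀·σ on ℝ^d by ∫f d(μ₀·σ) = ∫∫ f(ry) dμ₀(r) dσ(y). Then its Fourier transform satisfies, for large |ξ|, μ₀·σ^(ξ) = |ξ|^{−(d−1)/2}(c_d μ̂(−|ξ|) + c̄_d μ̂(|ξ|)) + O(|ξ|^{−(d+1)/2}), where c_d = e^{−πi(d−1)/4}; consequently dim_F(μ₀·σ) ≥ dim_F(μ) + d − 1. -/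

import Mathlib

/-!
The measure μ₀·σ superposes the dilates of σ, so its Fourier transform at ξ is
∫ σ̂(rξ) dμ₀(r). Inserting the asymptotic of σ̂ at |rξ| = r|ξ|, the density r^{(d-1)/2} of μ₀
cancels the factor (r|ξ|)^{-(d-1)/2} of the leading term up to |ξ|^{-(d-1)/2}, and what remains
integrates to c_d μ̂(-|ξ|) + c̄_d μ̂(|ξ|); since r ≥ a > 0 on the support, the error terms stay
O(|ξ|^{-(d+1)/2}). Squaring, a decay |μ̂(t)|² ≲ |t|^{-s} becomes |(μ₀·σ)^(ξ)|² ≲ |ξ|^{-s-(d-1)},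
the error term being harmless because s ≤ 1.
-/

open MeasureTheory
open scoped ENNReal Pointwise

/-- Fourier transform of a measure on `ℝ^d`. -/
noncomputable def ftR {d : ℕ} (μ : Measure (EuclideanSpace ℝ (Fin d)))
    (ξ : EuclideanSpace ℝ (Fin d)) : ℂ :=
  ∫ x, Complex.exp (((-2 * Real.pi * (inner ℝ x ξ : ℝ) : ℝ) : ℂ) * Complex.I) ∂μ

/-- Fourier dimension of a set `A ⊆ ℝ^d`. -/
noncomputable def fDimS {d : ℕ} (A : Set (EuclideanSpace ℝ (Fin d))) : ℝ :=
  sSup {s : ℝ | 0 ≤ s ∧ s ≤ d ∧ ∃ μ : Measure (EuclideanSpace ℝ (Fin d)),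
    μ ≠ 0 ∧ IsFiniteMeasure μ ∧ (∃ K, IsCompact K ∧ K ⊆ A ∧ μ Kᶜ = 0) ∧
    ∃ C : ℝ, ∀ ξ, ‖ftR μ ξ‖ ^ 2 * ‖ξ‖ ^ s ≤ C}

/-- Fourier transform of a measure on `ℝ`. -/
noncomputable def ft1 (μ : Measure ℝ) (ξ : ℝ) : ℂ :=
  ∫ x, Complex.exp (((-2 * Real.pi * x * ξ : ℝ) : ℂ) * Complex.I) ∂μ

/-- Fourier dimension of a measure on `ℝ^d`. -/
noncomputable def fDimM {d : ℕ} (μ : Measure (EuclideanSpace ℝ (Fin d))) : ℝ :=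
  sSup {s : ℝ | 0 ≤ s ∧ s ≤ d ∧ ∃ C : ℝ, ∀ ξ, ‖ftR μ ξ‖ ^ 2 * ‖ξ‖ ^ s ≤ C}

/-- Fourier dimension of a measure on `ℝ`. -/
noncomputable def fDimM1 (μ : Measure ℝ) : ℝ :=
  sSup {s : ℝ | 0 ≤ s ∧ s ≤ 1 ∧ ∃ C : ℝ, ∀ ξ, ‖ft1 μ ξ‖ ^ 2 * |ξ| ^ s ≤ C}

/-- The measure `μ · σ`, i.e. the pushforward of `μ × σ` under `(r, y) ↦ r • y`. -/
noncomputable def mulConv {d : ℕ} (μ : Measure ℝ) (σ : Measure (EuclideanSpace ℝ (Fin d))) :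
    Measure (EuclideanSpace ℝ (Fin d)) :=
  (μ.prod σ).map (fun p => p.1 • p.2)

/-- The constant `c_d = e^{-πi(d-1)/4}`. -/
noncomputable def cconst (d : ℕ) : ℂ :=
  Complex.exp (((-(Real.pi * ((d : ℝ) - 1) / 4) : ℝ) : ℂ) * Complex.I)

open Set Filter

section FourierBasics

variable {X : Type*} [MeasurableSpace X] (ν : Measure X) [IsFiniteMeasure ν]

lemma integrable_exp_ofReal_mul_I {f : X → ℝ} (hf : Measurable f) :
    Integrable (fun x => Complex.exp ((f x : ℂ) * Complex.I)) ν :=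
  Integrable.of_bound (by fun_prop) 1
    (ae_of_all _ fun _ => (Complex.norm_exp_ofReal_mul_I _).le)

lemma norm_integral_exp_ofReal_mul_I_le (f : X → ℝ) :
    ‖∫ x, Complex.exp ((f x : ℂ) * Complex.I) ∂ν‖ ≤ ν.real univ :=
  (norm_integral_le_of_norm_le_const
    (ae_of_all _ fun _ => (Complex.norm_exp_ofReal_mul_I _).le)).trans_eq (one_mul _)

end FourierBasics

lemma norm_ftR_le {d : ℕ} (ν : Measure (EuclideanSpace ℝ (Fin d))) [IsFiniteMeasure ν]
    (ξ : EuclideanSpace ℝ (Fin d)) : ‖ftR ν ξ‖ ≤ ν.real univ :=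
  norm_integral_exp_ofReal_mul_I_le ν _

lemma norm_ft1_le (μ : Measure ℝ) [IsFiniteMeasure μ] (t : ℝ) : ‖ft1 μ t‖ ≤ μ.real univ :=
  norm_integral_exp_ofReal_mul_I_le μ _

lemma norm_cconst (d : ℕ) : ‖cconst d‖ = 1 :=
  Complex.norm_exp_ofReal_mul_I _

lemma ftR_smul_eq_integral {d : ℕ} (σ : Measure (EuclideanSpace ℝ (Fin d)))
    (ξ : EuclideanSpace ℝ (Fin d)) (r : ℝ) :
    ftR σ (r • ξ) =
      ∫ y, Complex.exp (((-2 * Real.pi * inner ℝ (r • y) ξ : ℝ) : ℂ) * Complex.I) ∂σ := by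
  simp only [ftR, real_inner_smul_left, real_inner_smul_right]

section MulConv

variable {d : ℕ} (ν : Measure ℝ) [IsFiniteMeasure ν]
  (σ : Measure (EuclideanSpace ℝ (Fin d))) [IsFiniteMeasure σ] (ξ : EuclideanSpace ℝ (Fin d))

lemma integrable_prod_exp_inner_smul :
    Integrable (fun p : ℝ × EuclideanSpace ℝ (Fin d) =>
      Complex.exp (((-2 * Real.pi * inner ℝ (p.1 • p.2) ξ : ℝ) : ℂ) * Complex.I)) (ν.prod σ) :=
  integrable_exp_ofReal_mul_I _ (by fun_prop)

lemma integrable_ftR_smul : Integrable (fun r => ftR σ (r • ξ)) ν := by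
  simpa only [ftR_smul_eq_integral] using (integrable_prod_exp_inner_smul ν σ ξ).integral_prod_left

lemma ftR_mulConv : ftR (mulConv ν σ) ξ = ∫ r, ftR σ (r • ξ) ∂ν := by
  rw [ftR, mulConv, integral_map (by fun_prop) (by fun_prop),
    integral_prod _ (integrable_prod_exp_inner_smul ν σ ξ)]
  simp only [ftR_smul_eq_integral]

instance : IsFiniteMeasure (mulConv ν σ) := by
  unfold mulConv; infer_instance

end MulConv

section SupportedOnIcc

variable {ν : Measure ℝ} {a b : ℝ}

lemma integrable_of_continuousOn_Icc [IsFiniteMeasure ν] (hν : ∀ᵐ r ∂ν, r ∈ Icc a b)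
    {E : Type*} [NormedAddCommGroup E] {f : ℝ → E} (hf : ContinuousOn f (Icc a b)) :
    Integrable f ν := by
  simpa only [IntegrableOn, Measure.restrict_eq_self_of_ae_mem hν] using
    hf.integrableOn_compact (μ := ν) isCompact_Icc

lemma isFiniteMeasure_withDensity_rpow [IsFiniteMeasure ν] (ha : 0 < a)
    (hν : ∀ᵐ r ∂ν, r ∈ Icc a b) (p : ℝ) :
    IsFiniteMeasure (ν.withDensity fun r => ENNReal.ofReal (r ^ p)) :=
  isFiniteMeasure_withDensity_ofReal (integrable_of_continuousOn_Icc hν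
    (continuousOn_id.rpow_const fun _ hr => Or.inl (ha.trans_le hr.1).ne')).hasFiniteIntegral

end SupportedOnIcc

lemma integral_withDensity_rpow_smul {E : Type*} [NormedAddCommGroup E] [NormedSpace ℝ E]
    {μ : Measure ℝ} (hμ : ∀ᵐ r ∂μ, 0 < r) (p : ℝ) {x : ℝ} (hx : 0 < x) (f : ℝ → E) :
    ∫ r, (r * x) ^ (-p) • f r ∂(μ.withDensity fun r => ENNReal.ofReal (r ^ p)) =
      x ^ (-p) • ∫ r, f r ∂μ := by
  rw [integral_withDensity_eq_integral_toReal_smul (by fun_prop)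
    (ae_of_all _ fun _ => ENNReal.ofReal_lt_top), ← integral_smul]
  refine integral_congr_ae ?_
  filter_upwards [hμ] with r hr
  rw [ENNReal.toReal_ofReal (Real.rpow_nonneg hr.le p), smul_smul,
    Real.mul_rpow hr.le hx.le, ← mul_assoc, ← Real.rpow_add hr, add_neg_cancel, Real.rpow_zero,
    one_mul]

theorem norm_ftR_mulConv_sub_le {d : ℕ} {σ : Measure (EuclideanSpace ℝ (Fin d))}
    [IsFiniteMeasure σ] {ν : Measure ℝ} [IsFiniteMeasure ν] {a b : ℝ} (ha : 0 < a)
    (hν : ∀ᵐ r ∂ν, r ∈ Icc a b) {L : ℝ → ℂ} (hL : Continuous L) {α β C R : ℝ} (hβ : 0 ≤ β)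
    (hσ : ∀ ξ, R ≤ ‖ξ‖ → ‖ftR σ ξ - ‖ξ‖ ^ (-α) • L ‖ξ‖‖ ≤ C * ‖ξ‖ ^ (-β))
    {ξ : EuclideanSpace ℝ (Fin d)} (hξ : 0 < ‖ξ‖) (hRξ : R ≤ a * ‖ξ‖) :
    ‖ftR (mulConv ν σ) ξ - ∫ r, (r * ‖ξ‖) ^ (-α) • L (r * ‖ξ‖) ∂ν‖ ≤
      max C 0 * a ^ (-β) * ν.real univ * ‖ξ‖ ^ (-β) := by
  have hleading : Integrable (fun r => (r * ‖ξ‖) ^ (-α) • L (r * ‖ξ‖)) ν :=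
    integrable_of_continuousOn_Icc hν <|
      ((continuousOn_id.mul continuousOn_const).rpow_const fun _ hr =>
        Or.inl (mul_pos (ha.trans_le hr.1) hξ).ne').smul (by fun_prop)
  rw [ftR_mulConv, ← integral_sub (integrable_ftR_smul ν σ ξ) hleading]
  refine (norm_integral_le_of_norm_le_const (C := max C 0 * a ^ (-β) * ‖ξ‖ ^ (-β)) ?_).trans_eq
    (by ring)
  filter_upwards [hν] with r hr
  have hr0 : 0 < r := ha.trans_le hr.1
  have hnorm : ‖r • ξ‖ = r * ‖ξ‖ := by rw [norm_smul, Real.norm_of_nonneg hr0.le]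
  calc ‖ftR σ (r • ξ) - (r * ‖ξ‖) ^ (-α) • L (r * ‖ξ‖)‖
      ≤ C * (r * ‖ξ‖) ^ (-β) := by
        simpa only [hnorm] using hσ (r • ξ) (hnorm ▸ hRξ.trans (by gcongr; exact hr.1))
    _ ≤ max C 0 * (a * ‖ξ‖) ^ (-β) := by
        refine mul_le_mul (le_max_left _ _) ?_ (by positivity) (le_max_right _ _)
        exact Real.rpow_le_rpow_of_nonpos (by positivity) (by gcongr; exact hr.1) (by linarith)
    _ = max C 0 * a ^ (-β) * ‖ξ‖ ^ (-β) := by rw [Real.mul_rpow ha.le hξ.le, mul_assoc]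

noncomputable def sphereWave (d : ℕ) (t : ℝ) : ℂ :=
  cconst d * Complex.exp (((2 * Real.pi * t : ℝ) : ℂ) * Complex.I) +
    (starRingEnd ℂ) (cconst d) * Complex.exp (((-2 * Real.pi * t : ℝ) : ℂ) * Complex.I)

lemma continuous_sphereWave (d : ℕ) : Continuous (sphereWave d) := by
  unfold sphereWave; fun_prop

lemma integral_sphereWave_mul (d : ℕ) (μ : Measure ℝ) [IsFiniteMeasure μ] (x : ℝ) :
    ∫ r, sphereWave d (r * x) ∂μ =
      cconst d * ft1 μ (-x) + (starRingEnd ℂ) (cconst d) * ft1 μ x := by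
  have hexp (t : ℝ) :
      Integrable (fun r : ℝ => Complex.exp (((-2 * Real.pi * r * t : ℝ) : ℂ) * Complex.I)) μ :=
    integrable_exp_ofReal_mul_I μ (by fun_prop)
  rw [ft1, ft1, ← integral_const_mul, ← integral_const_mul,
    ← integral_add ((hexp _).const_mul _) ((hexp _).const_mul _)]
  congr 1 with r
  simp only [sphereWave]
  ring_nf

lemma csSup_add_le_csSup {s t : Set ℝ} (hs : s.Nonempty) (ht : BddAbove t) {c : ℝ}
    (h : ∀ x ∈ s, x + c ∈ t) : sSup s + c ≤ sSup t :=
  le_sub_iff_add_le.1 <| csSup_le hs fun x hx => le_sub_iff_add_le.2 (le_csSup ht (h x hx))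

lemma exists_forall_norm_sq_mul_rpow_le {E F : Type*} [SeminormedAddCommGroup E]
    [SeminormedAddCommGroup F] {f : E → F} {M s R C : ℝ} (hM : ∀ ξ, ‖f ξ‖ ≤ M) (hs : 0 ≤ s)
    (hlarge : ∀ ξ, R ≤ ‖ξ‖ → ‖f ξ‖ ^ 2 * ‖ξ‖ ^ s ≤ C) :
    ∃ C', ∀ ξ, ‖f ξ‖ ^ 2 * ‖ξ‖ ^ s ≤ C' := by
  refine ⟨max (M ^ 2 * R ^ s) C, fun ξ => ?_⟩
  rcases lt_or_ge ‖ξ‖ R with hξ | hξ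
  · refine le_max_of_le_left (mul_le_mul ?_ ?_ (by positivity) ?_)
    · exact pow_le_pow_left₀ (norm_nonneg _) (hM ξ) 2
    · exact Real.rpow_le_rpow (norm_nonneg _) hξ.le hs
    · exact (sq_nonneg _).trans (pow_le_pow_left₀ (norm_nonneg _) (hM ξ) 2)
  · exact le_max_of_le_right (hlarge ξ hξ)

lemma norm_ftR_le_of_asymptotic {d : ℕ} {ν : Measure (EuclideanSpace ℝ (Fin d))}
    {μ : Measure ℝ} {α β C R : ℝ}
    (hasymp : ∀ ξ : EuclideanSpace ℝ (Fin d), R ≤ ‖ξ‖ →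
      ‖ftR ν ξ - ((‖ξ‖ ^ (-α) : ℝ) : ℂ) *
        (cconst d * ft1 μ (-‖ξ‖) + (starRingEnd ℂ) (cconst d) * ft1 μ ‖ξ‖)‖
        ≤ C * ‖ξ‖ ^ (-β))
    {ξ : EuclideanSpace ℝ (Fin d)} (hξ : R ≤ ‖ξ‖) :
    ‖ftR ν ξ‖ ≤ ‖ξ‖ ^ (-α) * (‖ft1 μ (-‖ξ‖)‖ + ‖ft1 μ ‖ξ‖‖) + C * ‖ξ‖ ^ (-β) := by
  refine (norm_le_insert' _ _).trans (add_le_add ?_ (hasymp ξ hξ))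
  have hpos : 0 ≤ ‖ξ‖ ^ (-α) := by positivity
  rw [norm_mul, Complex.norm_real, Real.norm_of_nonneg hpos]
  refine mul_le_mul_of_nonneg_left ((norm_add_le _ _).trans_eq ?_) hpos
  rw [norm_mul, norm_mul, RCLike.norm_conj, norm_cconst, one_mul, one_mul]

lemma norm_ftR_sq_mul_rpow_le {d : ℕ} {ν : Measure (EuclideanSpace ℝ (Fin d))}
    {μ : Measure ℝ} {C R : ℝ}
    (hasymp : ∀ ξ : EuclideanSpace ℝ (Fin d), R ≤ ‖ξ‖ →
      ‖ftR ν ξ - ((‖ξ‖ ^ (-(((d : ℝ) - 1) / 2)) : ℝ) : ℂ) *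
        (cconst d * ft1 μ (-‖ξ‖) + (starRingEnd ℂ) (cconst d) * ft1 μ ‖ξ‖)‖
        ≤ C * ‖ξ‖ ^ (-(((d : ℝ) + 1) / 2)))
    {s C₁ : ℝ} (hs : s ≤ 1) (hμ : ∀ t, ‖ft1 μ t‖ ^ 2 * |t| ^ s ≤ C₁)
    {ξ : EuclideanSpace ℝ (Fin d)} (hξ : max R 1 ≤ ‖ξ‖) :
    ‖ftR ν ξ‖ ^ 2 * ‖ξ‖ ^ (s + ((d : ℝ) - 1)) ≤ 8 * C₁ + 2 * C ^ 2 := by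
  set x := ‖ξ‖
  have hx1 : 1 ≤ x := le_of_max_le_right hξ
  have hx0 : 0 < x := one_pos.trans_le hx1
  set y := x ^ (((d : ℝ) - 1) / 2)
  have hy0 : 0 < y := Real.rpow_pos_of_pos hx0 _
  have hpow : x ^ (s + ((d : ℝ) - 1)) = x ^ s * y ^ 2 := by
    rw [Real.rpow_add hx0, ← Real.rpow_natCast, ← Real.rpow_mul hx0.le]
    norm_num
  have hα : x ^ (-(((d : ℝ) - 1) / 2)) = y⁻¹ := Real.rpow_neg hx0.le _
  have hβ : x ^ (-(((d : ℝ) + 1) / 2)) = y⁻¹ * x⁻¹ := by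
    rw [Real.rpow_neg hx0.le, show ((d : ℝ) + 1) / 2 = ((d : ℝ) - 1) / 2 + 1 by ring,
      Real.rpow_add hx0, Real.rpow_one, mul_inv]
  set u := ‖ft1 μ (-x)‖
  set v := ‖ft1 μ x‖
  have hu : u ^ 2 * x ^ s ≤ C₁ := by simpa [abs_of_pos hx0] using hμ (-x)
  have hv : v ^ 2 * x ^ s ≤ C₁ := by simpa [abs_of_pos hx0] using hμ x
  have hnorm : y * ‖ftR ν ξ‖ ≤ u + v + C * x⁻¹ := by
    have h := norm_ftR_le_of_asymptotic hasymp (le_of_max_le_left hξ)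
    rw [hα, hβ] at h
    calc y * ‖ftR ν ξ‖ ≤ y * (y⁻¹ * (u + v) + C * (y⁻¹ * x⁻¹)) :=
          mul_le_mul_of_nonneg_left h hy0.le
      _ = u + v + C * x⁻¹ := by field_simp
  have hdecay : (x⁻¹) ^ 2 * x ^ s ≤ 1 :=
    calc (x⁻¹) ^ 2 * x ^ s ≤ (x⁻¹) ^ 2 * x ^ (2 : ℝ) := by
          gcongr; linarith
      _ = 1 := by rw [Real.rpow_two, inv_pow, inv_mul_cancel₀ (by positivity)]
  calc ‖ftR ν ξ‖ ^ 2 * x ^ (s + ((d : ℝ) - 1)) = (y * ‖ftR ν ξ‖) ^ 2 * x ^ s := by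
        rw [hpow]; ring
    _ ≤ (u + v + C * x⁻¹) ^ 2 * x ^ s := by gcongr
    _ ≤ (4 * (u ^ 2 + v ^ 2) + 2 * C ^ 2 * (x⁻¹) ^ 2) * x ^ s := by
        gcongr
        nlinarith [add_sq_le (a := u + v) (b := C * x⁻¹), add_sq_le (a := u) (b := v)]
    _ = 4 * (u ^ 2 * x ^ s) + 4 * (v ^ 2 * x ^ s) + 2 * C ^ 2 * ((x⁻¹) ^ 2 * x ^ s) := by ring
    _ ≤ 4 * C₁ + 4 * C₁ + 2 * C ^ 2 * 1 := by gcongr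
    _ = 8 * C₁ + 2 * C ^ 2 := by ring

theorem fDimM1_add_le_fDimM {d : ℕ} (hd : 1 ≤ d) {ν : Measure (EuclideanSpace ℝ (Fin d))}
    [IsFiniteMeasure ν] {μ : Measure ℝ} [IsFiniteMeasure μ]
    (hasymp : ∃ C R : ℝ, ∀ ξ : EuclideanSpace ℝ (Fin d), R ≤ ‖ξ‖ →
      ‖ftR ν ξ - ((‖ξ‖ ^ (-(((d : ℝ) - 1) / 2)) : ℝ) : ℂ) *
        (cconst d * ft1 μ (-‖ξ‖) + (starRingEnd ℂ) (cconst d) * ft1 μ ‖ξ‖)‖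
        ≤ C * ‖ξ‖ ^ (-(((d : ℝ) + 1) / 2))) :
    fDimM1 μ + ((d : ℝ) - 1) ≤ fDimM ν := by
  obtain ⟨C, R, hasymp⟩ := hasymp
  have hd' : (1 : ℝ) ≤ d := by exact_mod_cast hd
  have hzero : (0 : ℝ) ∈ {s : ℝ | 0 ≤ s ∧ s ≤ 1 ∧ ∃ C : ℝ, ∀ t, ‖ft1 μ t‖ ^ 2 * |t| ^ s ≤ C} :=
    ⟨le_rfl, zero_le_one, μ.real univ ^ 2, fun t => by
      simpa using pow_le_pow_left₀ (norm_nonneg _) (norm_ft1_le μ t) 2⟩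
  refine csSup_add_le_csSup ⟨0, hzero⟩ ⟨d, fun s hs => hs.2.1⟩ ?_
  rintro s ⟨hs0, hs1, C₁, hC₁⟩
  exact ⟨by linarith, by linarith, exists_forall_norm_sq_mul_rpow_le (norm_ftR_le ν)
    (by linarith) fun ξ hξ => norm_ftR_sq_mul_rpow_le hasymp hs1 hC₁ hξ⟩

theorem exists_norm_ftR_mulConv_withDensity_sub_le {d : ℕ}
    {σ : Measure (EuclideanSpace ℝ (Fin d))} [IsFiniteMeasure σ] {p β : ℝ} (hβ : 0 ≤ β)
    (hσ : ∃ Cσ Rσ : ℝ, ∀ ξ : EuclideanSpace ℝ (Fin d), Rσ ≤ ‖ξ‖ →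
      ‖ftR σ ξ - ((‖ξ‖ ^ (-p) : ℝ) : ℂ) * sphereWave d ‖ξ‖‖ ≤ Cσ * ‖ξ‖ ^ (-β))
    {μ : Measure ℝ} [IsFiniteMeasure μ] {a b : ℝ} (ha : 0 < a) (hμ : ∀ᵐ r ∂μ, r ∈ Icc a b) :
    ∃ C R₀ : ℝ, ∀ ξ : EuclideanSpace ℝ (Fin d), R₀ ≤ ‖ξ‖ →
      ‖ftR (mulConv (μ.withDensity fun r => ENNReal.ofReal (r ^ p)) σ) ξ -
        ((‖ξ‖ ^ (-p) : ℝ) : ℂ) *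
          (cconst d * ft1 μ (-‖ξ‖) + (starRingEnd ℂ) (cconst d) * ft1 μ ‖ξ‖)‖
        ≤ C * ‖ξ‖ ^ (-β) := by
  obtain ⟨Cσ, Rσ, hσ⟩ := hσ
  set μ₀ := μ.withDensity fun r => ENNReal.ofReal (r ^ p)
  have := isFiniteMeasure_withDensity_rpow ha hμ p
  refine ⟨max Cσ 0 * a ^ (-β) * μ₀.real univ, max (Rσ / a) 1, fun ξ hξ => ?_⟩
  have hξ0 : 0 < ‖ξ‖ := one_pos.trans_le (le_of_max_le_right hξ)
  have h := norm_ftR_mulConv_sub_le (ν := μ₀) (α := p) ha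
    ((withDensity_absolutelyContinuous _ _).ae_le hμ)
    (continuous_sphereWave d) hβ (fun ξ hξ => by rw [Complex.real_smul]; exact hσ ξ hξ) hξ0
    ((div_le_iff₀' ha).1 (le_of_max_le_left hξ))
  rwa [integral_withDensity_rpow_smul (hμ.mono fun r hr => ha.trans_le hr.1) _ hξ0,
    integral_sphereWave_mul, Complex.real_smul] at h

theorem stmt6_general {d : ℕ} (hd : 1 ≤ d) (σ : Measure (EuclideanSpace ℝ (Fin d)))
    [IsFiniteMeasure σ]
    -- the classical asymptotic for the Fourier transform of the surface measure:
    (hσasymp : ∃ Cσ Rσ : ℝ, ∀ ξ, Rσ ≤ ‖ξ‖ →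
      ‖ftR σ ξ - ((‖ξ‖ ^ (-(((d : ℝ) - 1) / 2)) : ℝ) : ℂ) *
        (cconst d * Complex.exp (((2 * Real.pi * ‖ξ‖ : ℝ) : ℂ) * Complex.I) +
          (starRingEnd ℂ) (cconst d) *
            Complex.exp (((-2 * Real.pi * ‖ξ‖ : ℝ) : ℂ) * Complex.I))‖
        ≤ Cσ * ‖ξ‖ ^ (-(((d : ℝ) + 1) / 2)))
    (μ : Measure ℝ) [IsFiniteMeasure μ]
    (a b : ℝ) (ha : 0 < a) (hμsupp : μ (Set.Icc a b)ᶜ = 0)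
    (μ₀ : Measure ℝ)
    (hμ₀ : μ₀ = μ.withDensity (fun r => ENNReal.ofReal (r ^ (((d : ℝ) - 1) / 2)))) :
    (∃ C R₀ : ℝ, ∀ ξ, R₀ ≤ ‖ξ‖ →
      ‖ftR (mulConv μ₀ σ) ξ - ((‖ξ‖ ^ (-(((d : ℝ) - 1) / 2)) : ℝ) : ℂ) *
        (cconst d * ft1 μ (-‖ξ‖) + (starRingEnd ℂ) (cconst d) * ft1 μ ‖ξ‖)‖
        ≤ C * ‖ξ‖ ^ (-(((d : ℝ) + 1) / 2))) ∧
      fDimM1 μ + ((d : ℝ) - 1) ≤ fDimM (mulConv μ₀ σ) := by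
  have hμ : ∀ᵐ r ∂μ, r ∈ Icc a b := measure_mono_null (fun _ => id) hμsupp
  have : IsFiniteMeasure μ₀ := hμ₀ ▸ isFiniteMeasure_withDensity_rpow ha hμ _
  have hasymp := hμ₀ ▸ exists_norm_ftR_mulConv_withDensity_sub_le (by positivity) hσasymp ha hμ
  exact ⟨hasymp, fDimM1_add_le_fDimM hd hasymp⟩

theorem stmt6 {d : ℕ} (hd : 1 ≤ d) (σ : Measure (EuclideanSpace ℝ (Fin d)))
    (hσ0 : σ ≠ 0) [IsFiniteMeasure σ]
    (hσsupp : σ (Metric.sphere (0 : EuclideanSpace ℝ (Fin d)) 1)ᶜ = 0)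
    -- the classical asymptotic for the Fourier transform of the surface measure:
    (hσasymp : ∃ Cσ Rσ : ℝ, ∀ ξ, Rσ ≤ ‖ξ‖ →
      ‖ftR σ ξ - ((‖ξ‖ ^ (-(((d : ℝ) - 1) / 2)) : ℝ) : ℂ) *
        (cconst d * Complex.exp (((2 * Real.pi * ‖ξ‖ : ℝ) : ℂ) * Complex.I) +
          (starRingEnd ℂ) (cconst d) *
            Complex.exp (((-2 * Real.pi * ‖ξ‖ : ℝ) : ℂ) * Complex.I))‖
        ≤ Cσ * ‖ξ‖ ^ (-(((d : ℝ) + 1) / 2)))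
    (μ : Measure ℝ) (hμ0 : μ ≠ 0) [IsFiniteMeasure μ]
    (a b : ℝ) (ha : 0 < a) (hab : a ≤ b) (hμsupp : μ (Set.Icc a b)ᶜ = 0)
    (μ₀ : Measure ℝ)
    (hμ₀ : μ₀ = μ.withDensity (fun r => ENNReal.ofReal (r ^ (((d : ℝ) - 1) / 2)))) :
    (∃ C R₀ : ℝ, ∀ ξ, R₀ ≤ ‖ξ‖ →
      ‖ftR (mulConv μ₀ σ) ξ - ((‖ξ‖ ^ (-(((d : ℝ) - 1) / 2)) : ℝ) : ℂ) *
        (cconst d * ft1 μ (-‖ξ‖) + (starRingEnd ℂ) (cconst d) * ft1 μ ‖ξ‖)‖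
        ≤ C * ‖ξ‖ ^ (-(((d : ℝ) + 1) / 2))) ∧
      fDimM1 μ + ((d : ℝ) - 1) ≤ fDimM (mulConv μ₀ σ) :=
  stmt6_general hd σ hσasymp μ a b ha hμsupp μ₀ hμ₀
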